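/- Let X = (I, P) be a PCS. Define P(!X) = {u^! | u ∈ P}^⊥⊥ ⊆ (ℝ≥0)^{Multiset I}, where u^! is the function μ ↦ u^μ on finite multisets. Then !X = (Multiset I, P(!X)) is a PCS: for every finite multiset μ over I there exists U ∈ P(!X) with U_μ > 0, and for every μ there exists A > 0 with U_μ ≤ A for all U ∈ P(!X). -/

import Mathlib

open scoped NNReal ENNReal

/-- The pairing `⟨u,u'⟩ = ∑' i, u i * u' i` in `[0,∞]`. -/
noncomputable def pairing {I : Type*} (u u' : I → ℝ≥0) : ℝ≥0∞ :=
  ∑' i, (u i : ℝ≥0∞) * (u' i : ℝ≥0∞)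

/-- The polar of a set of nonnegative vectors. -/
def polar {I : Type*} (X : Set (I → ℝ≥0)) : Set (I → ℝ≥0) :=
  {u' | ∀ u ∈ X, pairing u u' ≤ 1}

/-- A probabilistic coherence space structure on the set `P`. -/
def IsPCS {I : Type*} (P : Set (I → ℝ≥0)) : Prop :=
  polar (polar P) = P ∧
  (∀ a : I, ∃ u ∈ P, 0 < u a) ∧
  (∀ a : I, ∃ A : ℝ≥0, 0 < A ∧ ∀ u ∈ P, u a ≤ A)

/-- `u^μ`: the product, with multiplicities, of the values `u a` for `a ∈ μ`. -/
noncomputable def mpow {I : Type*} (u : I → ℝ≥0) (μ : Multiset I) : ℝ≥0 := (μ.map u).prod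

/-- Kleisli application `ŝ(u)_b = ∑' μ, s (μ,b) * u^μ` in `[0,∞]`. -/
noncomputable def kApp {I J : Type*} (s : Multiset I × J → ℝ≥0) (u : I → ℝ≥0) (b : J) : ℝ≥0∞ :=
  ∑' μ : Multiset I, (s (μ, b) : ℝ≥0∞) * (mpow u μ : ℝ≥0∞)

/-- `s` is a Kleisli morphism from `P` to `Q`. -/
def IsKleisli {I J : Type*} (s : Multiset I × J → ℝ≥0)
    (P : Set (I → ℝ≥0)) (Q : Set (J → ℝ≥0)) : Prop :=
  ∀ u ∈ P, (∀ b, kApp s u b ≠ ⊤) ∧ (fun b => (kApp s u b).toNNReal) ∈ Q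

/-! Being a polar, `P` is convex; it contains, for each `a`, a vector positive at `a`; averaging
these gives `u ∈ P` positive on the support of `μ`, and then `u^! ∈ P(!X)` is positive at `μ`.
Conversely `u^μ ≤ A^μ` for all `u ∈ P`, and a coordinate bound passes to the bipolar because
the rescaled basis vector `A⁻¹ e_a` lies in the polar. -/

section Polar

variable {I : Type*}

lemma pairing_comm (u u' : I → ℝ≥0) : pairing u u' = pairing u' u :=
  tsum_congr fun _ => mul_comm _ _

lemma pairing_smul_add_smul (v u u' : I → ℝ≥0) (a b : ℝ≥0) :
    pairing v (a • u + b • u') = a * pairing v u + b * pairing v u' := by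
  simp only [pairing, Pi.add_apply, Pi.smul_apply, smul_eq_mul, ENNReal.coe_add,
    ENNReal.coe_mul, mul_add, ← ENNReal.tsum_mul_left, ← ENNReal.tsum_add]
  exact tsum_congr fun _ => by ring

lemma pairing_single [DecidableEq I] (u : I → ℝ≥0) (a : I) (c : ℝ≥0) :
    pairing u (Pi.single a c) = u a * c := by
  rw [pairing, tsum_eq_single a fun i hi => by simp [hi]]
  simp

lemma subset_polar_polar (X : Set (I → ℝ≥0)) : X ⊆ polar (polar X) :=
  fun u hu v hv => pairing_comm v u ▸ hv u hu

lemma polar_anti {X Y : Set (I → ℝ≥0)} (h : X ⊆ Y) : polar Y ⊆ polar X :=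
  fun _ hv u hu => hv u (h hu)

lemma polar_polar_polar (X : Set (I → ℝ≥0)) : polar (polar (polar X)) = polar X :=
  (polar_anti (subset_polar_polar X)).antisymm (subset_polar_polar (polar X))

lemma zero_mem_polar (X : Set (I → ℝ≥0)) : 0 ∈ polar X :=
  fun u _ => by simp [pairing]

lemma convex_polar (X : Set (I → ℝ≥0)) : Convex ℝ≥0 (polar X) := by
  intro u hu u' hu' a b _ _ hab v hv
  calc pairing v (a • u + b • u') = a * pairing v u + b * pairing v u' :=
        pairing_smul_add_smul v u u' a b
    _ ≤ a * 1 + b * 1 := by gcongr; exacts [hu v hv, hu' v hv]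
    _ = 1 := by rw [mul_one, mul_one, ← ENNReal.coe_add, hab, ENNReal.coe_one]

lemma exists_mem_polar_forall_pos (X : Set (I → ℝ≥0)) (F : Finset I)
    (h : ∀ a ∈ F, ∃ u ∈ polar X, 0 < u a) : ∃ v ∈ polar X, ∀ a ∈ F, 0 < v a := by
  classical
  induction F using Finset.induction_on with
  | empty => exact ⟨0, zero_mem_polar X, by simp⟩
  | insert a F _ ih =>
    obtain ⟨v, hv, hvpos⟩ := ih fun b hb => h b (Finset.mem_insert_of_mem hb)
    obtain ⟨u, hu, hupos⟩ := h a (Finset.mem_insert_self a F)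
    have hhalf : (0 : ℝ≥0) < 2⁻¹ := by norm_num
    refine ⟨(2⁻¹ : ℝ≥0) • v + (2⁻¹ : ℝ≥0) • u,
      convex_polar X hv hu zero_le zero_le (by norm_num), ?_⟩
    intro b hb
    simp only [Pi.add_apply, Pi.smul_apply, smul_eq_mul]
    rcases Finset.mem_insert.mp hb with rfl | hb
    · exact add_pos_of_nonneg_of_pos zero_le (mul_pos hhalf hupos)
    · exact add_pos_of_pos_of_nonneg (mul_pos hhalf (hvpos b hb)) zero_le

lemma pairing_single_inv_le_one_iff [DecidableEq I] {A : ℝ≥0} (hA : 0 < A) (u : I → ℝ≥0)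
    (a : I) : pairing u (Pi.single a A⁻¹) ≤ 1 ↔ u a ≤ A := by
  rw [pairing_single, ← ENNReal.coe_mul, ENNReal.coe_le_one_iff, mul_inv_le_iff₀ hA, one_mul]

lemma le_of_mem_polar_polar {X : Set (I → ℝ≥0)} {a : I} {A : ℝ≥0} (hA : 0 < A)
    (hX : ∀ u ∈ X, u a ≤ A) : ∀ w ∈ polar (polar X), w a ≤ A := by
  classical
  have hsingle : Pi.single a A⁻¹ ∈ polar X := fun u hu =>
    (pairing_single_inv_le_one_iff hA u a).mpr (hX u hu)
  intro w hw
  exact (pairing_single_inv_le_one_iff hA w a).mp (pairing_comm w _ ▸ hw _ hsingle)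

end Polar

lemma mpow_pos {I : Type*} {u : I → ℝ≥0} {μ : Multiset I} (h : ∀ a ∈ μ, 0 < u a) :
    0 < mpow u μ :=
  Multiset.prod_pos fun _ hx => by
    obtain ⟨a, ha, rfl⟩ := Multiset.mem_map.mp hx
    exact h a ha

lemma mpow_le_mpow {I : Type*} {u v : I → ℝ≥0} {μ : Multiset I} (h : ∀ a ∈ μ, u a ≤ v a) :
    mpow u μ ≤ mpow v μ :=
  Multiset.prod_map_le_prod_map u v h

theorem excl_isPCS_general {I : Type*} (P : Set (I → ℝ≥0)) (hP : IsPCS P) :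
    IsPCS (polar (polar {w : Multiset I → ℝ≥0 | ∃ u ∈ P, w = fun μ => mpow u μ})) := by
  classical
  obtain ⟨hPP, hpos, hbdd⟩ := hP
  refine ⟨polar_polar_polar _, fun μ => ?_, fun μ => ?_⟩
  · obtain ⟨v, hv, hvpos⟩ :=
      exists_mem_polar_forall_pos (polar P) μ.toFinset fun a _ => hPP.symm ▸ hpos a
    exact ⟨_, subset_polar_polar _ ⟨v, hPP ▸ hv, rfl⟩,
      mpow_pos fun a ha => hvpos a (Multiset.mem_toFinset.mpr ha)⟩
  · choose A hA0 hA using hbdd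
    have hB : 0 < mpow A μ := mpow_pos fun a _ => hA0 a
    refine ⟨mpow A μ, hB, le_of_mem_polar_polar hB ?_⟩
    rintro _ ⟨u, hu, rfl⟩
    exact mpow_le_mpow fun a _ => hA a u hu

theorem excl_isPCS {I : Type*} [Countable I] (P : Set (I → ℝ≥0)) (hP : IsPCS P) :
    IsPCS (polar (polar {w : Multiset I → ℝ≥0 | ∃ u ∈ P, w = fun μ => mpow u μ})) :=
  excl_isPCS_general P hP
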